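/- Let Θ ⊆ ℝ^d be a nonempty closed convex set with diameter at most D (i.e., ‖x - y‖ ≤ D for all x, y ∈ Θ), and let f_1, ..., f_T : ℝ^d → ℝ be convex differentiable functions with ‖∇f_t(x)‖ ≤ G for all x ∈ Θ. Let θ_1 ∈ Θ and define θ_{t+1} = proj_Θ(θ_t - η ∇f_t(θ_t)) with step size η > 0. Then for any comparator sequence u_1, ..., u_T ∈ Θ, ∑_{t=1}^T f_t(θ_t) - ∑_{t=1}^T f_t(u_t) ≤ (D² + 2D·P_T)/(2η) + (η/2) G² T, where P_T = ∑_{t=1}^{T-1} ‖u_{t+1} - u_t‖ is the path-length. -/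

import Mathlib

/-!
Projected gradient descent on a convex `Θ` moves the iterate towards every comparator:
nonexpansiveness of the projection and the gradient inequality give, for each round,
`f_t(θ_t) - f_t(u_t) ≤ (‖θ_t - u_t‖² - ‖θ_{t+1} - u_t‖²) / (2η) + (η/2) G²`.
Summed over the rounds the distance terms telescope up to the comparator moving from `u_t` to
`u_{t+1}`, which changes a squared distance bounded by `D²` by at most `2 D ‖u_{t+1} - u_t‖`.
-/

open Finset
open scoped RealInnerProductSpace

section Convexity

variable {E : Type*} [NormedAddCommGroup E] [NormedSpace ℝ E]

theorem ConvexOn.add_apply_sub_le_of_hasFDerivAt {s : Set E} {f : E → ℝ} {f' : E →L[ℝ] ℝ}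
    {x y : E} (hf : ConvexOn ℝ s f) (hx : x ∈ s) (hy : y ∈ s) (hf' : HasFDerivAt f f' x) :
    f x + f' (y - x) ≤ f y := by
  set γ : ℝ →ᵃ[ℝ] E := AffineMap.lineMap x y
  have hγ0 : γ 0 = x := AffineMap.lineMap_apply_zero x y
  have hγ1 : γ 1 = y := AffineMap.lineMap_apply_one x y
  have hderiv : HasDerivAt (f ∘ γ) (f' (y - x)) 0 := by
    rw [← hγ0] at hf'
    exact hf'.comp_hasDerivAt 0 AffineMap.hasDerivAt_lineMap
  have hslope := (hf.comp_affineMap γ).le_slope_of_hasDerivAt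
    (by simpa [hγ0] using hx) (by simpa [hγ1] using hy) zero_lt_one hderiv
  rw [slope_def_field] at hslope
  simp only [Function.comp_apply, hγ0, hγ1, sub_zero, div_one] at hslope
  linarith

end Convexity

section InnerProduct

variable {E : Type*} [NormedAddCommGroup E] [InnerProductSpace ℝ E]

theorem ConvexOn.add_inner_sub_le_of_hasGradientAt [CompleteSpace E] {s : Set E} {f : E → ℝ}
    {g x y : E} (hf : ConvexOn ℝ s f) (hx : x ∈ s) (hy : y ∈ s) (hg : HasGradientAt f g x) :
    f x + ⟪g, y - x⟫ ≤ f y := by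
  simpa only [InnerProductSpace.toDual_apply_apply] using
    hf.add_apply_sub_le_of_hasFDerivAt hx hy hg

theorem sq_norm_sub_le_of_forall_norm_sub_le {K : Set E} (hK : Convex ℝ K) {x p y : E}
    (hp : p ∈ K) (hmin : ∀ w ∈ K, ‖x - p‖ ≤ ‖x - w‖) (hy : y ∈ K) :
    ‖p - y‖ ^ 2 ≤ ‖x - y‖ ^ 2 := by
  have : Nonempty K := ⟨⟨p, hp⟩⟩
  have hinf : ‖x - p‖ = ⨅ w : K, ‖x - w‖ :=
    le_antisymm (le_ciInf fun w => hmin w w.2)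
      (ciInf_le ⟨0, by rintro _ ⟨w, rfl⟩; positivity⟩ (⟨p, hp⟩ : K))
  have hobtuse : ⟪x - p, y - p⟫ ≤ 0 := (norm_eq_iInf_iff_real_inner_le_zero hK hp).1 hinf y hy
  have hsplit : ‖x - y‖ ^ 2 = ‖x - p‖ ^ 2 - 2 * ⟪x - p, y - p⟫ + ‖p - y‖ ^ 2 := by
    rw [show x - y = (x - p) - (y - p) by abel, norm_sub_sq_real, ← norm_neg (y - p), neg_sub]
  nlinarith [sq_nonneg ‖x - p‖]

theorem inner_sub_le_of_projected_gradient_step {K : Set E} (hK : Convex ℝ K) {x g p u : E}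
    {η : ℝ} (hη : 0 < η) (hp : p ∈ K) (hmin : ∀ w ∈ K, ‖x - η • g - p‖ ≤ ‖x - η • g - w‖)
    (hu : u ∈ K) :
    ⟪g, x - u⟫ ≤ (‖x - u‖ ^ 2 - ‖p - u‖ ^ 2) / (2 * η) + η / 2 * ‖g‖ ^ 2 := by
  have hproj := sq_norm_sub_le_of_forall_norm_sub_le hK hp hmin hu
  have hexpand : ‖x - η • g - u‖ ^ 2 = ‖x - u‖ ^ 2 - 2 * η * ⟪g, x - u⟫ + η ^ 2 * ‖g‖ ^ 2 := by
    rw [show x - η • g - u = (x - u) - η • g by abel, norm_sub_sq_real, real_inner_smul_right,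
      norm_smul, Real.norm_of_nonneg hη.le, real_inner_comm]
    ring
  rw [div_add' _ _ _ (by positivity), le_div_iff₀ (by positivity)]
  nlinarith

end InnerProduct

theorem Finset.sum_Icc_sub_eq_sub_add_sum_Icc {M : Type*} [AddCommGroup M] (a b : ℕ → M)
    (n : ℕ) :
    ∑ t ∈ Icc 1 (n + 1), (a t - b t) = a 1 - b (n + 1) + ∑ t ∈ Icc 1 n, (a (t + 1) - b t) := by
  induction n with
  | zero => simp
  | succ n ih =>
    rw [sum_Icc_succ_top (by omega), ih, sum_Icc_succ_top (by omega)]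
    abel

theorem sq_norm_sub_sub_sq_norm_sub_le {E : Type*} [SeminormedAddCommGroup E] {z v w : E}
    {D : ℝ} (hv : ‖z - v‖ ≤ D) (hw : ‖z - w‖ ≤ D) :
    ‖z - v‖ ^ 2 - ‖z - w‖ ^ 2 ≤ 2 * D * ‖v - w‖ := by
  have htri : ‖z - v‖ - ‖z - w‖ ≤ ‖v - w‖ := by
    simpa [norm_sub_rev w v] using norm_sub_norm_le (z - v) (z - w)
  nlinarith [norm_nonneg (z - v), norm_nonneg (z - w), norm_nonneg (v - w)]

theorem sum_sq_dist_decrement_le_of_diam {E : Type*} [SeminormedAddCommGroup E] {K : Set E} {D : ℝ}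
    (hdiam : ∀ x ∈ K, ∀ y ∈ K, ‖x - y‖ ≤ D)
    {θ u : ℕ → E} (hθ : ∀ t, 1 ≤ t → θ t ∈ K) (hu : ∀ t, u t ∈ K) (T : ℕ) :
    ∑ t ∈ Icc 1 T, (‖θ t - u t‖ ^ 2 - ‖θ (t + 1) - u t‖ ^ 2)
      ≤ D ^ 2 + 2 * D * ∑ t ∈ Icc 1 (T - 1), ‖u (t + 1) - u t‖ := by
  have hD : 0 ≤ D := (norm_nonneg _).trans (hdiam _ (hu 0) _ (hu 0))
  cases T with
  | zero => simpa using sq_nonneg D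
  | succ n =>
    have hfirst : ‖θ 1 - u 1‖ ^ 2 ≤ D ^ 2 :=
      pow_le_pow_left₀ (norm_nonneg _) (hdiam _ (hθ 1 le_rfl) _ (hu 1)) 2
    have hmoves : ∑ t ∈ Icc 1 n, (‖θ (t + 1) - u (t + 1)‖ ^ 2 - ‖θ (t + 1) - u t‖ ^ 2)
        ≤ 2 * D * ∑ t ∈ Icc 1 n, ‖u (t + 1) - u t‖ := by
      rw [mul_sum]
      exact sum_le_sum fun t _ => sq_norm_sub_sub_sq_norm_sub_le
        (hdiam _ (hθ _ (by omega)) _ (hu _)) (hdiam _ (hθ _ (by omega)) _ (hu _))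
    rw [sum_Icc_sub_eq_sub_add_sum_Icc, Nat.add_sub_cancel]
    nlinarith [sq_nonneg ‖θ (n + 1) - u (n + 1)‖]

theorem stmt_1_general {d : ℕ} (Θ : Set (EuclideanSpace ℝ (Fin d)))
    (hconv : Convex ℝ Θ)
    (D : ℝ) (hdiam : ∀ x ∈ Θ, ∀ y ∈ Θ, ‖x - y‖ ≤ D)
    (T : ℕ)
    (f : ℕ → EuclideanSpace ℝ (Fin d) → ℝ)
    (f' : ℕ → EuclideanSpace ℝ (Fin d) → EuclideanSpace ℝ (Fin d))
    (hconvf : ∀ t, ConvexOn ℝ Set.univ (f t))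
    (hdiff : ∀ t x, HasGradientAt (f t) (f' t x) x)
    (G : ℝ) (hG : ∀ t, ∀ x ∈ Θ, ‖f' t x‖ ≤ G)
    (proj : EuclideanSpace ℝ (Fin d) → EuclideanSpace ℝ (Fin d))
    (hproj : ∀ x, proj x ∈ Θ ∧ ∀ y ∈ Θ, ‖x - proj x‖ ≤ ‖x - y‖)
    (η : ℝ) (hη : 0 < η)
    (θ : ℕ → EuclideanSpace ℝ (Fin d)) (hθ1 : θ 1 ∈ Θ)
    (hupdate : ∀ t, θ (t + 1) = proj (θ t - η • f' t (θ t)))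
    (u : ℕ → EuclideanSpace ℝ (Fin d)) (hu : ∀ t, u t ∈ Θ) :
    ∑ t ∈ Finset.Icc 1 T, f t (θ t) - ∑ t ∈ Finset.Icc 1 T, f t (u t)
      ≤ (D ^ 2 + 2 * D * ∑ t ∈ Finset.Icc 1 (T - 1), ‖u (t + 1) - u t‖) / (2 * η)
        + η / 2 * G ^ 2 * T := by
  have hθ : ∀ t, 1 ≤ t → θ t ∈ Θ := by
    rintro (_ | _ | t) ht
    exacts [absurd ht (by omega), hθ1, hupdate (t + 1) ▸ (hproj _).1]
  have hround : ∀ t ∈ Icc 1 T, f t (θ t) - f t (u t)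
      ≤ (‖θ t - u t‖ ^ 2 - ‖θ (t + 1) - u t‖ ^ 2) / (2 * η) + η / 2 * G ^ 2 := by
    intro t ht
    have hθt := hθ t (mem_Icc.1 ht).1
    have hgrad := (hconvf t).add_inner_sub_le_of_hasGradientAt (Set.mem_univ (θ t))
      (Set.mem_univ (u t)) (hdiff t (θ t))
    have hstep := hupdate t ▸ inner_sub_le_of_projected_gradient_step hconv hη
      (hproj _).1 (hproj _).2 (hu t)
    have hG2 : ‖f' t (θ t)‖ ^ 2 ≤ G ^ 2 := pow_le_pow_left₀ (norm_nonneg _) (hG t _ hθt) 2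
    rw [← neg_sub, inner_neg_right] at hgrad
    nlinarith
  calc ∑ t ∈ Icc 1 T, f t (θ t) - ∑ t ∈ Icc 1 T, f t (u t)
      = ∑ t ∈ Icc 1 T, (f t (θ t) - f t (u t)) := (sum_sub_distrib ..).symm
    _ ≤ ∑ t ∈ Icc 1 T, ((‖θ t - u t‖ ^ 2 - ‖θ (t + 1) - u t‖ ^ 2) / (2 * η) + η / 2 * G ^ 2) :=
      sum_le_sum hround
    _ = (∑ t ∈ Icc 1 T, (‖θ t - u t‖ ^ 2 - ‖θ (t + 1) - u t‖ ^ 2)) / (2 * η)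
          + η / 2 * G ^ 2 * T := by
      rw [sum_add_distrib, ← sum_div, sum_const, Nat.card_Icc, nsmul_eq_mul, Nat.add_sub_cancel]
      ring
    _ ≤ _ := by
      gcongr
      exact sum_sq_dist_decrement_le_of_diam hdiam hθ hu T

/-- Dynamic regret bound for projected online gradient descent:
`∑ f_t(θ_t) - ∑ f_t(u_t) ≤ (D² + 2 D P_T)/(2η) + (η/2) G² T`. -/
theorem stmt_1 {d : ℕ} (Θ : Set (EuclideanSpace ℝ (Fin d)))
    (hne : Θ.Nonempty) (hclosed : IsClosed Θ) (hconv : Convex ℝ Θ)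
    (D : ℝ) (hdiam : ∀ x ∈ Θ, ∀ y ∈ Θ, ‖x - y‖ ≤ D)
    (T : ℕ)
    (f : ℕ → EuclideanSpace ℝ (Fin d) → ℝ)
    (f' : ℕ → EuclideanSpace ℝ (Fin d) → EuclideanSpace ℝ (Fin d))
    (hconvf : ∀ t, ConvexOn ℝ Set.univ (f t))
    (hdiff : ∀ t x, HasGradientAt (f t) (f' t x) x)
    (G : ℝ) (hG : ∀ t, ∀ x ∈ Θ, ‖f' t x‖ ≤ G)
    (proj : EuclideanSpace ℝ (Fin d) → EuclideanSpace ℝ (Fin d))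
    (hproj : ∀ x, proj x ∈ Θ ∧ ∀ y ∈ Θ, ‖x - proj x‖ ≤ ‖x - y‖)
    (η : ℝ) (hη : 0 < η)
    (θ : ℕ → EuclideanSpace ℝ (Fin d)) (hθ1 : θ 1 ∈ Θ)
    (hupdate : ∀ t, θ (t + 1) = proj (θ t - η • f' t (θ t)))
    (u : ℕ → EuclideanSpace ℝ (Fin d)) (hu : ∀ t, u t ∈ Θ) :
    ∑ t ∈ Finset.Icc 1 T, f t (θ t) - ∑ t ∈ Finset.Icc 1 T, f t (u t)
      ≤ (D ^ 2 + 2 * D * ∑ t ∈ Finset.Icc 1 (T - 1), ‖u (t + 1) - u t‖) / (2 * η)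
        + η / 2 * G ^ 2 * T :=
  stmt_1_general Θ hconv D hdiam T f f' hconvf hdiff G hG proj hproj η hη θ hθ1 hupdate u hu
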